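/- arXiv:1110.0285 — 3 statements merged into one kernel-verified Lean document; each statement's English description precedes it below -/
import Mathlib

section
/- If σ is a nonzero root of 2σ²(σ/α + λ) = |f|², then the second derivative of Π^d at σ equals (3σ + 2αλ)/(−ασ). In particular, for a root σ₃ with −αλ < σ₃ < −2αλ/3 we have (Π^d)''(σ₃) < 0, and for a root σ₂ with −2αλ/3 < σ₂ < 0 we have (Π^d)''(σ₂) > 0. -/
/-!
On a root, substituting `‖f‖² = 2σ²(σ/α + λ)` into `(Π^d)''(σ) = -‖f‖²/σ³ - 1/α` gives
`(3σ + 2αλ)/(-ασ)`. Both intervals lie in `σ < 0`, where the denominator is positive, so the sign is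
that of `3σ + 2αλ`.
-/

/-- The paper's `Π^d`, with `c = ‖f‖²`. -/
noncomputable def dualEnergy (c α lam : ℝ) (s : ℝ) : ℝ := -c / (2 * s) - s ^ 2 / (2 * α) - s * lam

theorem hasDerivAt_dualEnergy (c : ℝ) {α : ℝ} (lam : ℝ) (hα : α ≠ 0) {s : ℝ} (hs : s ≠ 0) :
    HasDerivAt (dualEnergy c α lam) (c / (2 * s ^ 2) - s / α - lam) s := by
  refine ((((hasDerivAt_const s (-c)).div ((hasDerivAt_id' s).const_mul 2) (by simpa)).sub
    ((hasDerivAt_pow 2 s).div_const (2 * α))).sub ((hasDerivAt_id' s).mul_const lam)).congr_deriv ?_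
  field_simp
  ring

theorem hasDerivAt_deriv_dualEnergy (c : ℝ) {α : ℝ} (lam : ℝ) (hα : α ≠ 0) {s : ℝ} (hs : s ≠ 0) :
    HasDerivAt (fun s => c / (2 * s ^ 2) - s / α - lam) (-c / s ^ 3 - 1 / α) s := by
  refine ((((hasDerivAt_const s c).div ((hasDerivAt_pow 2 s).const_mul 2) (by simpa)).sub
    ((hasDerivAt_id' s).div_const α)).sub (hasDerivAt_const s lam)).congr_deriv ?_
  field_simp
  ring

theorem deriv_deriv_dualEnergy (c : ℝ) {α : ℝ} (lam : ℝ) (hα : α ≠ 0) {σ : ℝ} (hσ : σ ≠ 0) :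
    deriv (deriv (dualEnergy c α lam)) σ = -c / σ ^ 3 - 1 / α := by
  have hderiv : deriv (dualEnergy c α lam) =ᶠ[nhds σ] fun s => c / (2 * s ^ 2) - s / α - lam := by
    filter_upwards [isOpen_ne.mem_nhds hσ] with s hs
    exact (hasDerivAt_dualEnergy c lam hα hs).deriv
  rw [hderiv.deriv_eq]
  exact (hasDerivAt_deriv_dualEnergy c lam hα hσ).deriv

theorem deriv_deriv_dualEnergy_of_root {c α lam σ : ℝ} (hα : α ≠ 0) (hσ : σ ≠ 0)
    (hroot : 2 * σ ^ 2 * (σ / α + lam) = c) :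
    deriv (deriv (dualEnergy c α lam)) σ = (3 * σ + 2 * α * lam) / (-α * σ) := by
  rw [deriv_deriv_dualEnergy c lam hα hσ, ← hroot]
  field_simp
  ring

theorem stmt_13_general (n : ℕ) (α lam : ℝ) (hα : 0 < α)
    (f : EuclideanSpace ℝ (Fin n)) :
    (∀ σ : ℝ, σ ≠ 0 → 2 * σ ^ 2 * (σ / α + lam) = ‖f‖ ^ 2 →
      deriv (deriv (fun s : ℝ => -‖f‖ ^ 2 / (2 * s) - s ^ 2 / (2 * α) - s * lam)) σ
        = (3 * σ + 2 * α * lam) / (-α * σ)) ∧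
    (∀ σ₃ : ℝ, 2 * σ₃ ^ 2 * (σ₃ / α + lam) = ‖f‖ ^ 2 →
      -α * lam < σ₃ → σ₃ < -2 * α * lam / 3 →
      deriv (deriv (fun s : ℝ => -‖f‖ ^ 2 / (2 * s) - s ^ 2 / (2 * α) - s * lam)) σ₃ < 0) ∧
    (∀ σ₂ : ℝ, 2 * σ₂ ^ 2 * (σ₂ / α + lam) = ‖f‖ ^ 2 →
      -2 * α * lam / 3 < σ₂ → σ₂ < 0 →
      0 < deriv (deriv (fun s : ℝ => -‖f‖ ^ 2 / (2 * s) - s ^ 2 / (2 * α) - s * lam)) σ₂) := by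
  have formula : ∀ σ : ℝ, σ ≠ 0 → 2 * σ ^ 2 * (σ / α + lam) = ‖f‖ ^ 2 →
      deriv (deriv (fun s : ℝ => -‖f‖ ^ 2 / (2 * s) - s ^ 2 / (2 * α) - s * lam)) σ
        = (3 * σ + 2 * α * lam) / (-α * σ) :=
    fun σ hσ hroot => deriv_deriv_dualEnergy_of_root hα.ne' hσ hroot
  refine ⟨formula, fun σ₃ hroot hlower hupper => ?_, fun σ₂ hroot hlower hupper => ?_⟩
  · have hneg : σ₃ < 0 := by nlinarith
    rw [formula σ₃ hneg.ne hroot]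
    exact div_neg_of_neg_of_pos (by linarith) (by nlinarith)
  · rw [formula σ₂ hupper.ne hroot]
    exact div_pos (by linarith) (by nlinarith)

/-- If `σ` is a nonzero root of `2σ²(σ/α + λ) = ‖f‖²`, then
`(Π^d)''(σ) = (3σ + 2αλ)/(−ασ)`; in particular it is negative for a root
in `(−αλ, −2αλ/3)` and positive for a root in `(−2αλ/3, 0)`. -/
theorem stmt_13 (n : ℕ) (α lam : ℝ) (hα : 0 < α) (hlam : 0 < lam)
    (f : EuclideanSpace ℝ (Fin n)) (hf : f ≠ 0) :
    (∀ σ : ℝ, σ ≠ 0 → 2 * σ ^ 2 * (σ / α + lam) = ‖f‖ ^ 2 →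
      deriv (deriv (fun s : ℝ => -‖f‖ ^ 2 / (2 * s) - s ^ 2 / (2 * α) - s * lam)) σ
        = (3 * σ + 2 * α * lam) / (-α * σ)) ∧
    (∀ σ₃ : ℝ, 2 * σ₃ ^ 2 * (σ₃ / α + lam) = ‖f‖ ^ 2 →
      -α * lam < σ₃ → σ₃ < -2 * α * lam / 3 →
      deriv (deriv (fun s : ℝ => -‖f‖ ^ 2 / (2 * s) - s ^ 2 / (2 * α) - s * lam)) σ₃ < 0) ∧
    (∀ σ₂ : ℝ, 2 * σ₂ ^ 2 * (σ₂ / α + lam) = ‖f‖ ^ 2 →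
      -2 * α * lam / 3 < σ₂ → σ₂ < 0 →
      0 < deriv (deriv (fun s : ℝ => -‖f‖ ^ 2 / (2 * s) - s ^ 2 / (2 * α) - s * lam)) σ₂) :=
  stmt_13_general n α lam hα f
end

section
/- If σ₃ is a root of 2σ²(σ/α + λ) = |f|² with −αλ < σ₃ < −2αλ/3, and x₃ = f/σ₃, then the Hessian of Π at x₃ is negative semidefinite: for all z ∈ ℝⁿ, zᵀ∇²Π(x₃)z ≤ α|z|²(3σ₃/α + 2λ) ≤ 0. Hence x₃ is a local maximizer of Π. -/
/-!
The root condition says exactly that `x₃ = σ₃⁻¹ • f` satisfies `α (‖x₃‖²/2 - λ) = σ₃`, i.e. `x₃` is a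
critical point of `Π`, and `‖x₃‖² = 2 (σ₃/α + λ)`. The Hessian bound is then Cauchy–Schwarz for
`⟪x₃, z⟫`. For the local maximum, `Π` is a quartic, so its expansion at a critical point is exact:
`Π (x₃ + z) - Π x₃ = σ₃ ‖z‖²/2 + α/2 (⟪x₃, z⟫ + ‖z‖²/2)² ≤ ‖z‖²/2 (σ₃ + α (‖x₃‖ + ‖z‖/2)²)`,
and the last factor tends to `σ₃ + α ‖x₃‖² = 3σ₃ + 2αλ < 0` as `z → 0`.
-/

open RealInnerProductSpace Topology

section DoubleWell

variable {E : Type*} [NormedAddCommGroup E] [InnerProductSpace ℝ E]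

noncomputable def doubleWellEnergy (α lam : ℝ) (f x : E) : ℝ :=
  α / 2 * (‖x‖ ^ 2 / 2 - lam) ^ 2 - ⟪f, x⟫

theorem doubleWellEnergy_add_sub {α lam σ : ℝ} {f x₀ : E} (hf : f = σ • x₀)
    (hcrit : α * (‖x₀‖ ^ 2 / 2 - lam) = σ) (z : E) :
    doubleWellEnergy α lam f (x₀ + z) - doubleWellEnergy α lam f x₀
      = σ * ‖z‖ ^ 2 / 2 + α / 2 * (⟪x₀, z⟫ + ‖z‖ ^ 2 / 2) ^ 2 := by
  subst hf
  simp only [doubleWellEnergy, norm_add_sq_real, inner_add_right, real_inner_smul_left,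
    real_inner_self_eq_norm_sq]
  linear_combination (⟪x₀, z⟫ + ‖z‖ ^ 2 / 2) * hcrit

theorem doubleWellEnergy_add_sub_le {α lam σ : ℝ} {f x₀ : E} (hα : 0 ≤ α)
    (hf : f = σ • x₀) (hcrit : α * (‖x₀‖ ^ 2 / 2 - lam) = σ) (z : E) :
    doubleWellEnergy α lam f (x₀ + z) - doubleWellEnergy α lam f x₀
      ≤ ‖z‖ ^ 2 / 2 * (σ + α * (‖x₀‖ + ‖z‖ / 2) ^ 2) := by
  have hp := abs_le.mp (abs_real_inner_le_norm x₀ z)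
  have hsq : (⟪x₀, z⟫ + ‖z‖ ^ 2 / 2) ^ 2 ≤ (‖z‖ * (‖x₀‖ + ‖z‖ / 2)) ^ 2 :=
    sq_le_sq' (by nlinarith [sq_nonneg ‖z‖]) (by linarith)
  rw [doubleWellEnergy_add_sub hf hcrit]
  nlinarith [mul_le_mul_of_nonneg_left hsq hα]

theorem isLocalMax_doubleWellEnergy {α lam σ : ℝ} {f x₀ : E} (hα : 0 ≤ α)
    (hf : f = σ • x₀) (hcrit : α * (‖x₀‖ ^ 2 / 2 - lam) = σ)
    (hneg : σ + α * ‖x₀‖ ^ 2 < 0) :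
    IsLocalMax (doubleWellEnergy α lam f) x₀ := by
  have hcont : Continuous fun x => σ + α * (‖x₀‖ + ‖x - x₀‖ / 2) ^ 2 := by fun_prop
  have hnear : ∀ᶠ x in 𝓝 x₀, σ + α * (‖x₀‖ + ‖x - x₀‖ / 2) ^ 2 < 0 :=
    hcont.continuousAt.eventually_lt (g := fun _ => 0) continuousAt_const (by simpa using hneg)
  filter_upwards [hnear] with x hx
  have hle := doubleWellEnergy_add_sub_le hα hf hcrit (x - x₀)
  rw [add_sub_cancel] at hle
  nlinarith [mul_nonpos_of_nonneg_of_nonpos (by positivity : 0 ≤ ‖x - x₀‖ ^ 2 / 2) hx.le]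

theorem norm_inv_smul_sq_of_root {α lam σ : ℝ} {f : E} (hα : α ≠ 0) (hσ : σ ≠ 0)
    (hroot : 2 * σ ^ 2 * (σ / α + lam) = ‖f‖ ^ 2) :
    ‖σ⁻¹ • f‖ ^ 2 = 2 * (σ / α + lam) := by
  rw [norm_smul, mul_pow, norm_inv, Real.norm_eq_abs, inv_pow, sq_abs, ← hroot]
  field_simp

end DoubleWell

theorem stmt_14_general (n : ℕ) (α lam : ℝ) (hα : 0 < α)
    (f : EuclideanSpace ℝ (Fin n))
    (σ₃ : ℝ) (hroot : 2 * σ₃ ^ 2 * (σ₃ / α + lam) = ‖f‖ ^ 2)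
    (h₁ : -α * lam < σ₃) (h₂ : σ₃ < -2 * α * lam / 3) :
    (∀ z : EuclideanSpace ℝ (Fin n),
      α * (⟪f, z⟫ ^ 2 / σ₃ ^ 2 + (σ₃ / α) * ‖z‖ ^ 2)
        ≤ α * ‖z‖ ^ 2 * (3 * σ₃ / α + 2 * lam) ∧
      α * ‖z‖ ^ 2 * (3 * σ₃ / α + 2 * lam) ≤ 0) ∧
    IsLocalMax (fun x : EuclideanSpace ℝ (Fin n) =>
      α / 2 * (‖x‖ ^ 2 / 2 - lam) ^ 2 - ⟪f, x⟫) (σ₃⁻¹ • f) := by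
  have hσ : σ₃ < 0 := by linarith
  have hnorm := norm_inv_smul_sq_of_root hα.ne' hσ.ne hroot
  have hσα : α * (σ₃ / α) = σ₃ := mul_div_cancel₀ σ₃ hα.ne'
  have hcoeff : 3 * σ₃ / α + 2 * lam < 0 := by
    have : 3 * σ₃ / α < -2 * lam := by rw [div_lt_iff₀ hα]; linarith
    linarith
  refine ⟨fun z => ⟨?_, mul_nonpos_of_nonneg_of_nonpos (by positivity) hcoeff.le⟩, ?_⟩
  · have hcs : ⟪f, z⟫ ^ 2 / σ₃ ^ 2 ≤ 2 * (σ₃ / α + lam) * ‖z‖ ^ 2 :=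
      calc ⟪f, z⟫ ^ 2 / σ₃ ^ 2 = |⟪σ₃⁻¹ • f, z⟫| ^ 2 := by
            rw [sq_abs, real_inner_smul_left]; field_simp
        _ ≤ (‖σ₃⁻¹ • f‖ * ‖z‖) ^ 2 := by gcongr; exact abs_real_inner_le_norm _ _
        _ = 2 * (σ₃ / α + lam) * ‖z‖ ^ 2 := by rw [mul_pow, hnorm]
    calc α * (⟪f, z⟫ ^ 2 / σ₃ ^ 2 + (σ₃ / α) * ‖z‖ ^ 2)
        ≤ α * (2 * (σ₃ / α + lam) * ‖z‖ ^ 2 + (σ₃ / α) * ‖z‖ ^ 2) := by gcongr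
      _ = α * ‖z‖ ^ 2 * (3 * σ₃ / α + 2 * lam) := by ring
  · refine isLocalMax_doubleWellEnergy hα.le (smul_inv_smul₀ hσ.ne f).symm ?_ ?_
    · rw [hnorm]; linear_combination hσα
    · rw [hnorm]; linarith

/-- If `σ₃` is a root of `2σ²(σ/α + λ) = ‖f‖²` with `−αλ < σ₃ < −2αλ/3` and
`x₃ = f/σ₃`, then the Hessian of `Π` at `x₃` is negative semidefinite:
`zᵀ∇²Π(x₃)z = α(⟪f,z⟫²/σ₃² + (σ₃/α)‖z‖²) ≤ α‖z‖²(3σ₃/α + 2λ) ≤ 0` for all `z`;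
hence `x₃` is a local maximizer of `Π`. -/
theorem stmt_14 (n : ℕ) (α lam : ℝ) (hα : 0 < α) (hlam : 0 < lam)
    (f : EuclideanSpace ℝ (Fin n)) (hf : f ≠ 0)
    (σ₃ : ℝ) (hroot : 2 * σ₃ ^ 2 * (σ₃ / α + lam) = ‖f‖ ^ 2)
    (h₁ : -α * lam < σ₃) (h₂ : σ₃ < -2 * α * lam / 3) :
    (∀ z : EuclideanSpace ℝ (Fin n),
      α * (⟪f, z⟫ ^ 2 / σ₃ ^ 2 + (σ₃ / α) * ‖z‖ ^ 2)
        ≤ α * ‖z‖ ^ 2 * (3 * σ₃ / α + 2 * lam) ∧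
      α * ‖z‖ ^ 2 * (3 * σ₃ / α + 2 * lam) ≤ 0) ∧
    IsLocalMax (fun x : EuclideanSpace ℝ (Fin n) =>
      α / 2 * (‖x‖ ^ 2 / 2 - lam) ^ 2 - ⟪f, x⟫) (σ₃⁻¹ • f) :=
  stmt_14_general n α lam hα f σ₃ hroot h₁ h₂
end

section
/- Perturbation convergence: fix f₀ ∈ ℝⁿ with 0 < |f₀|² < 8α²λ³/27 and set f_k = f₀/k for k ∈ ℕ. Let σ_{1,k} > 0 > σ_{2,k} > −2αλ/3 > σ_{3,k} > −αλ be the three real roots of 2σ²(σ/α + λ) = |f_k|² and x_{i,k} = f_k/σ_{i,k}. Then x_{1,k} → √(2λ)·f₀/|f₀|, x_{2,k} → −√(2λ)·f₀/|f₀|, and x_{3,k} → 0 as k → ∞. In particular the limits of x_{1,k} and x_{2,k} are global minimizers of W(x) = (α/2)(|x|²/2 − λ)². -/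
/-!
For a root `s` at level `k`, the equation `2 s² (s/α + λ) = ‖f₀‖²/k²` reads
`2 (s k)² (s/α + λ) = ‖f₀‖²`. On the two branches above `-2αλ/3` the factor `s/α + λ` is at
least `λ/3`, so `s k` stays bounded; hence `s → 0`, `s/α + λ → λ` and
`(s k)⁻¹ → ±√(2λ)/‖f₀‖` with the sign of `s`. Below `-2αλ/3`, `|s| > 2αλ/3` gives
`‖f_k / s‖ = O(1/k)`. Both nonzero limits have squared norm `2λ`, where the double-well
potential vanishes.
-/

open Filter Topology

lemma tendsto_zero_of_abs_mul_natCast_le {u : ℕ → ℝ} {M : ℝ}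
    (h : ∀ᶠ k in atTop, |u k * k| ≤ M) : Tendsto u atTop (𝓝 0) := by
  refine squeeze_zero_norm' ?_ (tendsto_const_div_atTop_nhds_zero_nat M)
  filter_upwards [h, eventually_gt_atTop 0] with k hM hk
  have hk : (0 : ℝ) < k := by exact_mod_cast hk
  rwa [Real.norm_eq_abs, le_div_iff₀ hk, ← abs_of_pos hk, ← abs_mul]

lemma abs_le_sqrt_of_two_mul_sq_mul_eq {s q c δ : ℝ} (hδ : 0 < δ) (hq : δ ≤ q)
    (h : 2 * s ^ 2 * q = c ^ 2) : |s| ≤ √(c ^ 2 / (2 * δ)) := by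
  refine Real.abs_le_sqrt ?_
  rw [le_div_iff₀ (by positivity)]
  nlinarith [mul_le_mul_of_nonneg_left hq (sq_nonneg s)]

lemma inv_eq_sqrt_div_of_two_mul_sq_mul_eq {s q c : ℝ} (hs : 0 < s) (hc : 0 < c)
    (h : 2 * s ^ 2 * q = c ^ 2) : s⁻¹ = √(2 * q) / c := by
  have hq : 2 * q = (c / s) ^ 2 := by
    field_simp
    linarith
  rw [hq, Real.sqrt_sq (by positivity)]
  field_simp

lemma tendsto_inv_of_two_mul_sq_mul_eq {s q : ℕ → ℝ} {c L : ℝ} (hc : 0 < c)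
    (hq : Tendsto q atTop (𝓝 L)) (hs : ∀ᶠ k in atTop, 0 < s k)
    (h : ∀ᶠ k in atTop, 2 * s k ^ 2 * q k = c ^ 2) :
    Tendsto (fun k => (s k)⁻¹) atTop (𝓝 (√(2 * L) / c)) := by
  refine ((hq.const_mul 2).sqrt.div_const c).congr' ?_
  filter_upwards [hs, h] with k hs h
  exact (inv_eq_sqrt_div_of_two_mul_sq_mul_eq hs hc h).symm

lemma two_mul_mul_natCast_sq_mul_eq_norm_sq {E : Type*} [NormedAddCommGroup E]
    [NormedSpace ℝ E] {v : E} {k : ℕ} (hk : k ≠ 0) {s q : ℝ}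
    (h : 2 * s ^ 2 * q = ‖(k : ℝ)⁻¹ • v‖ ^ 2) : 2 * (s * k) ^ 2 * q = ‖v‖ ^ 2 := by
  rw [norm_smul, Real.norm_eq_abs, mul_pow, sq_abs, inv_pow, inv_mul_eq_div,
    eq_div_iff (by positivity)] at h
  rw [← h]
  ring

section Roots

variable {α lam c : ℝ} {σ : ℕ → ℝ}

lemma tendsto_zero_of_root (hα : 0 < α) (hlam : 0 < lam)
    (hbranch : ∀ᶠ k in atTop, -2 * α * lam / 3 < σ k)
    (hroot : ∀ᶠ k in atTop, 2 * (σ k * k) ^ 2 * (σ k / α + lam) = c ^ 2) :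
    Tendsto σ atTop (𝓝 0) := by
  refine tendsto_zero_of_abs_mul_natCast_le (M := √(c ^ 2 / (2 * (lam / 3)))) ?_
  filter_upwards [hbranch, hroot] with k hb hr
  have hq : lam / 3 ≤ σ k / α + lam := by
    have : -(2 * lam / 3) ≤ σ k / α := by
      rw [le_div_iff₀ hα]
      linarith
    linarith
  exact abs_le_sqrt_of_two_mul_sq_mul_eq (by positivity) hq hr

lemma tendsto_inv_mul_natCast_of_pos_root (hα : 0 < α) (hlam : 0 < lam) (hc : 0 < c)
    (hpos : ∀ᶠ k in atTop, 0 < σ k)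
    (hroot : ∀ᶠ k in atTop, 2 * (σ k * k) ^ 2 * (σ k / α + lam) = c ^ 2) :
    Tendsto (fun k => (σ k * k)⁻¹) atTop (𝓝 (√(2 * lam) / c)) := by
  have hσ := tendsto_zero_of_root hα hlam
    (hpos.mono fun k hk => by linarith [mul_pos hα hlam]) hroot
  have hq : Tendsto (fun k => σ k / α + lam) atTop (𝓝 lam) := by
    simpa using (hσ.div_const α).add_const lam
  refine tendsto_inv_of_two_mul_sq_mul_eq hc hq ?_ hroot
  filter_upwards [hpos, eventually_gt_atTop 0] with k hσk hk
  positivity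

lemma tendsto_inv_mul_natCast_of_neg_root (hα : 0 < α) (hlam : 0 < lam) (hc : 0 < c)
    (hneg : ∀ᶠ k in atTop, -2 * α * lam / 3 < σ k ∧ σ k < 0)
    (hroot : ∀ᶠ k in atTop, 2 * (σ k * k) ^ 2 * (σ k / α + lam) = c ^ 2) :
    Tendsto (fun k => (σ k * k)⁻¹) atTop (𝓝 (-√(2 * lam) / c)) := by
  have hσ := tendsto_zero_of_root hα hlam (hneg.mono fun _ hk => hk.1) hroot
  have hq : Tendsto (fun k => σ k / α + lam) atTop (𝓝 lam) := by
    simpa using (hσ.div_const α).add_const lam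
  have hpos : ∀ᶠ k in atTop, 0 < -(σ k * k) := by
    filter_upwards [hneg, eventually_gt_atTop 0] with k hσk hk
    exact neg_pos.2 (mul_neg_of_neg_of_pos hσk.2 (by exact_mod_cast hk))
  have hlim := tendsto_inv_of_two_mul_sq_mul_eq hc hq hpos
    (hroot.mono fun _ hk => by rwa [neg_sq])
  simpa [neg_div, inv_neg] using hlim.neg

lemma tendsto_inv_mul_natCast_of_lt (hα : 0 < α) (hlam : 0 < lam)
    (h : ∀ᶠ k in atTop, σ k < -2 * α * lam / 3) :
    Tendsto (fun k => (σ k * k)⁻¹) atTop (𝓝 0) := by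
  refine tendsto_zero_of_abs_mul_natCast_le (M := 3 / (2 * α * lam)) ?_
  filter_upwards [h, eventually_gt_atTop 0] with k hσk hk
  have hk : (k : ℝ) ≠ 0 := by positivity
  have hαlam := mul_pos hα hlam
  rw [mul_inv, inv_mul_cancel_right₀ hk, abs_inv, abs_of_neg (by linarith), ← one_div,
    div_le_div_iff₀ (by linarith) (by positivity)]
  linarith

end Roots

noncomputable def doubleWell {E : Type*} [NormedAddCommGroup E] (α lam : ℝ) (x : E) : ℝ :=
  α / 2 * (‖x‖ ^ 2 / 2 - lam) ^ 2

lemma doubleWell_le_of_norm_sq_eq {E : Type*} [NormedAddCommGroup E] {α lam : ℝ}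
    (hα : 0 ≤ α) {y : E} (hy : ‖y‖ ^ 2 = 2 * lam) (x : E) :
    doubleWell α lam y ≤ doubleWell α lam x := by
  have hy : ‖y‖ ^ 2 / 2 - lam = 0 := by
    rw [hy]
    ring
  rw [doubleWell, doubleWell, hy, sq, mul_zero, mul_zero]
  positivity

lemma norm_div_norm_smul_sq {E : Type*} [NormedAddCommGroup E] [NormedSpace ℝ E]
    {v : E} (hv : v ≠ 0) (a : ℝ) : ‖(a / ‖v‖) • v‖ ^ 2 = a ^ 2 := by
  rw [norm_smul, norm_div, norm_norm, div_mul_cancel₀ _ (norm_ne_zero_iff.2 hv),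
    Real.norm_eq_abs, sq_abs]

theorem stmt_18_general (n : ℕ) (α lam : ℝ) (hα : 0 < α) (hlam : 0 < lam)
    (f₀ : EuclideanSpace ℝ (Fin n))
    (hf₀ : 0 < ‖f₀‖ ^ 2)
    (σ₁ σ₂ σ₃ : ℕ → ℝ)
    (hord : ∀ k : ℕ, 1 ≤ k →
      σ₁ k > 0 ∧ 0 > σ₂ k ∧ σ₂ k > -2 * α * lam / 3 ∧
      -2 * α * lam / 3 > σ₃ k ∧ σ₃ k > -α * lam)
    (hroot : ∀ k : ℕ, 1 ≤ k →
      2 * (σ₁ k) ^ 2 * (σ₁ k / α + lam) = ‖(k : ℝ)⁻¹ • f₀‖ ^ 2 ∧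
      2 * (σ₂ k) ^ 2 * (σ₂ k / α + lam) = ‖(k : ℝ)⁻¹ • f₀‖ ^ 2 ∧
      2 * (σ₃ k) ^ 2 * (σ₃ k / α + lam) = ‖(k : ℝ)⁻¹ • f₀‖ ^ 2) :
    Tendsto (fun k : ℕ => (σ₁ k)⁻¹ • ((k : ℝ)⁻¹ • f₀)) atTop
      (nhds ((Real.sqrt (2 * lam) / ‖f₀‖) • f₀)) ∧
    Tendsto (fun k : ℕ => (σ₂ k)⁻¹ • ((k : ℝ)⁻¹ • f₀)) atTop
      (nhds ((-(Real.sqrt (2 * lam)) / ‖f₀‖) • f₀)) ∧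
    Tendsto (fun k : ℕ => (σ₃ k)⁻¹ • ((k : ℝ)⁻¹ • f₀)) atTop (nhds 0) ∧
    (∀ x : EuclideanSpace ℝ (Fin n),
      α / 2 * (‖(Real.sqrt (2 * lam) / ‖f₀‖) • f₀‖ ^ 2 / 2 - lam) ^ 2
        ≤ α / 2 * (‖x‖ ^ 2 / 2 - lam) ^ 2) ∧
    (∀ x : EuclideanSpace ℝ (Fin n),
      α / 2 * (‖(-(Real.sqrt (2 * lam)) / ‖f₀‖) • f₀‖ ^ 2 / 2 - lam) ^ 2
        ≤ α / 2 * (‖x‖ ^ 2 / 2 - lam) ^ 2) := by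
  have hf₀ne : f₀ ≠ 0 := by
    rintro rfl
    simp at hf₀
  have hord := eventually_atTop.2 ⟨1, hord⟩
  have hroot := eventually_atTop.2 ⟨1, hroot⟩
  have hscaled : ∀ σ : ℕ → ℝ,
      (∀ᶠ k in atTop, 2 * σ k ^ 2 * (σ k / α + lam) = ‖(k : ℝ)⁻¹ • f₀‖ ^ 2) →
      ∀ᶠ k in atTop, 2 * (σ k * k) ^ 2 * (σ k / α + lam) = ‖f₀‖ ^ 2 := fun σ h => by
    filter_upwards [h, eventually_gt_atTop 0] with k hk hk0
    exact two_mul_mul_natCast_sq_mul_eq_norm_sq hk0.ne' hk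
  have hc : 0 < ‖f₀‖ := norm_pos_iff.2 hf₀ne
  have hsq : Real.sqrt (2 * lam) ^ 2 = 2 * lam := Real.sq_sqrt (by positivity)
  simp_rw [smul_smul, ← mul_inv]
  refine ⟨?_, ?_, ?_, doubleWell_le_of_norm_sq_eq hα.le ?_, doubleWell_le_of_norm_sq_eq hα.le ?_⟩
  · exact (tendsto_inv_mul_natCast_of_pos_root hα hlam hc (hord.mono fun _ h => h.1)
      (hscaled σ₁ (hroot.mono fun _ h => h.1))).smul_const f₀
  · exact (tendsto_inv_mul_natCast_of_neg_root hα hlam hc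
      (hord.mono fun _ h => ⟨h.2.2.1, h.2.1⟩)
      (hscaled σ₂ (hroot.mono fun _ h => h.2.1))).smul_const f₀
  · simpa using (tendsto_inv_mul_natCast_of_lt hα hlam
      (hord.mono fun _ h => h.2.2.2.1)).smul_const f₀
  · rw [norm_div_norm_smul_sq hf₀ne, hsq]
  · rw [norm_div_norm_smul_sq hf₀ne, neg_sq, hsq]

/-- Perturbation convergence: with `f_k = f₀/k` and the three ordered real
roots `σ_{1,k} > 0 > σ_{2,k} > −2αλ/3 > σ_{3,k} > −αλ` of
`2σ²(σ/α + λ) = ‖f_k‖²`, the corresponding points `x_{i,k} = f_k/σ_{i,k}`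
satisfy `x_{1,k} → √(2λ) f₀/‖f₀‖`, `x_{2,k} → −√(2λ) f₀/‖f₀‖`, `x_{3,k} → 0`;
moreover the limits of `x_{1,k}` and `x_{2,k}` are global minimizers of
`W(x) = (α/2)(‖x‖²/2 − λ)²`. -/
theorem stmt_18 (n : ℕ) (α lam : ℝ) (hα : 0 < α) (hlam : 0 < lam)
    (f₀ : EuclideanSpace ℝ (Fin n))
    (hf₀ : 0 < ‖f₀‖ ^ 2) (hf₀' : ‖f₀‖ ^ 2 < 8 * α ^ 2 * lam ^ 3 / 27)
    (σ₁ σ₂ σ₃ : ℕ → ℝ)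
    (hord : ∀ k : ℕ, 1 ≤ k →
      σ₁ k > 0 ∧ 0 > σ₂ k ∧ σ₂ k > -2 * α * lam / 3 ∧
      -2 * α * lam / 3 > σ₃ k ∧ σ₃ k > -α * lam)
    (hroot : ∀ k : ℕ, 1 ≤ k →
      2 * (σ₁ k) ^ 2 * (σ₁ k / α + lam) = ‖(k : ℝ)⁻¹ • f₀‖ ^ 2 ∧
      2 * (σ₂ k) ^ 2 * (σ₂ k / α + lam) = ‖(k : ℝ)⁻¹ • f₀‖ ^ 2 ∧
      2 * (σ₃ k) ^ 2 * (σ₃ k / α + lam) = ‖(k : ℝ)⁻¹ • f₀‖ ^ 2) :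
    Tendsto (fun k : ℕ => (σ₁ k)⁻¹ • ((k : ℝ)⁻¹ • f₀)) atTop
      (nhds ((Real.sqrt (2 * lam) / ‖f₀‖) • f₀)) ∧
    Tendsto (fun k : ℕ => (σ₂ k)⁻¹ • ((k : ℝ)⁻¹ • f₀)) atTop
      (nhds ((-(Real.sqrt (2 * lam)) / ‖f₀‖) • f₀)) ∧
    Tendsto (fun k : ℕ => (σ₃ k)⁻¹ • ((k : ℝ)⁻¹ • f₀)) atTop (nhds 0) ∧
    (∀ x : EuclideanSpace ℝ (Fin n),
      α / 2 * (‖(Real.sqrt (2 * lam) / ‖f₀‖) • f₀‖ ^ 2 / 2 - lam) ^ 2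
        ≤ α / 2 * (‖x‖ ^ 2 / 2 - lam) ^ 2) ∧
    (∀ x : EuclideanSpace ℝ (Fin n),
      α / 2 * (‖(-(Real.sqrt (2 * lam)) / ‖f₀‖) • f₀‖ ^ 2 / 2 - lam) ^ 2
        ≤ α / 2 * (‖x‖ ^ 2 / 2 - lam) ^ 2) :=
  stmt_18_general n α lam hα hlam f₀ hf₀ σ₁ σ₂ σ₃ hord hroot
end
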